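/- Let G' be obtained from a graph G by adding a false twin x' of a vertex x (i.e., x' is a new vertex with N(x') = N(x) and x' not adjacent to x). Then for every neighbor a of x, the edges (x', a) and (x, a) are true twins in L(G')², i.e., they are adjacent in L(G')² and have the same closed neighborhood there. -/

import Mathlib

open SimpleGraph

/-- Two edges of `G` are in conflict (at distance at most one): they are distinct and
some endpoint of one is equal or adjacent to some endpoint of the other. -/
def edgeConflict {V : Type*} (G : SimpleGraph V) (e f : Sym2 V) : Prop :=
  e ≠ f ∧ ∃ a ∈ e, ∃ b ∈ f, a = b ∨ G.Adj a b

/-- A strong edge coloring of `G`: conflicting edges get different colors. -/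
def IsStrongEdgeColoring {V : Type*} (G : SimpleGraph V) (C : Sym2 V → ℕ) : Prop :=
  ∀ e ∈ G.edgeSet, ∀ f ∈ G.edgeSet, edgeConflict G e f → C e ≠ C f

/-- The strong chromatic index: the least `k` such that `G` has a strong edge
coloring using colors `0, …, k-1`. -/
noncomputable def strongChromaticIndex {V : Type*} (G : SimpleGraph V) : ℕ :=
  sInf {k | ∃ C : Sym2 V → ℕ, IsStrongEdgeColoring G C ∧ ∀ e ∈ G.edgeSet, C e < k}

/-- The square of the line graph of `G`: vertices are the edges of `G`, two edges being
adjacent iff they are at distance at most one in `G` (distance at most two in `L(G)`). -/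
def lineGraphSq {V : Type*} (G : SimpleGraph V) : SimpleGraph G.edgeSet where
  Adj e f := edgeConflict G e.1 f.1
  symm := by
    constructor
    rintro ⟨e, he⟩ ⟨f, hf⟩ ⟨hne, a, ha, b, hb, hab⟩
    refine ⟨fun h => hne (by simpa using h.symm), b, hb, a, ha, ?_⟩
    rcases hab with h | h
    · exact Or.inl h.symm
    · exact Or.inr h.symm
  loopless := by constructor; rintro ⟨e, he⟩ ⟨hne, -⟩; exact hne rfl

/-- The graph obtained from `G` by adding a false twin (the new vertex `none`)
of the vertex `x`: `none` has the same open neighborhood as `x` and is not adjacent to `x`. -/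
def addFalseTwin {V : Type*} (G : SimpleGraph V) (x : V) : SimpleGraph (Option V) :=
  SimpleGraph.fromRel (fun u v => match u, v with
    | some a, some b => G.Adj a b
    | none, some a => G.Adj x a
    | _, _ => False)


lemma twin_adj {V : Type*} (G : SimpleGraph V) (x : V) (c : Option V) :
    (addFalseTwin G x).Adj (some x) c ↔ (addFalseTwin G x).Adj none c := by
  cases c with
  | none =>
    simp only [addFalseTwin, SimpleGraph.fromRel_adj]
    constructor
    · rintro ⟨h1, (h | h)⟩ <;> simp_all
    · rintro ⟨h1, -⟩; exact absurd rfl h1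
  | some w =>
    simp only [addFalseTwin, SimpleGraph.fromRel_adj]
    constructor
    · rintro ⟨h1, (h | h)⟩
      · exact ⟨by simp, Or.inl h⟩
      · exact ⟨by simp, Or.inl h.symm⟩
    · rintro ⟨h1, (h | h)⟩
      · exact ⟨by simpa using fun hxw => (hxw ▸ h).ne rfl, Or.inl h⟩
      · exact h.elim

/-- If `G'` is obtained from `G` by adding a false twin `x'` of `x`, then for every
neighbor `a` of `x`, the edges `(x', a)` and `(x, a)` are true twins in `L(G')²`:
they are adjacent there and have the same closed neighborhood. -/
theorem addFalseTwin_trueTwin_edges {V : Type*} (G : SimpleGraph V) (x a : V)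
    (ha : G.Adj x a)
    (he : s(some x, some a) ∈ (addFalseTwin G x).edgeSet)
    (hf : s((none : Option V), some a) ∈ (addFalseTwin G x).edgeSet) :
    (lineGraphSq (addFalseTwin G x)).Adj ⟨_, he⟩ ⟨_, hf⟩ ∧
      ∀ g : (addFalseTwin G x).edgeSet,
        ((lineGraphSq (addFalseTwin G x)).Adj ⟨_, he⟩ g ∨ g = ⟨_, he⟩) ↔
        ((lineGraphSq (addFalseTwin G x)).Adj ⟨_, hf⟩ g ∨ g = ⟨_, hf⟩) := by
  have hadj : (lineGraphSq (addFalseTwin G x)).Adj ⟨_, he⟩ ⟨_, hf⟩ := by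
    refine ⟨?_, some a, by simp, some a, by simp, Or.inl rfl⟩
    intro h
    have := Sym2.eq_iff.mp h
    simp at this
  refine ⟨hadj, fun g => ?_⟩
  constructor
  · rintro (⟨hne, b, hb, c, hc, hbc⟩ | rfl)
    · by_cases hgf : g = ⟨_, hf⟩
      · exact Or.inr hgf
      · left
        have hgf' : s((none : Option V), some a) ≠ g.1 := fun h => hgf (Subtype.ext h.symm)
        refine ⟨hgf', ?_⟩
        rcases Sym2.mem_iff.mp hb with rfl | rfl
        · -- b = some x
          rcases hbc with rfl | hbc
          · exact ⟨some a, by simp, some x, hc, Or.inr ((addFalseTwin G x).adj_symm he)⟩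
          · exact ⟨none, by simp, c, hc, Or.inr ((twin_adj G x c).mp hbc)⟩
        · exact ⟨some a, by simp, c, hc, hbc⟩
    · exact Or.inl (hadj.symm)
  · rintro (⟨hne, b, hb, c, hc, hbc⟩ | rfl)
    · by_cases hge : g = ⟨_, he⟩
      · exact Or.inr hge
      · left
        have hge' : s(some x, some a) ≠ g.1 := fun h => hge (Subtype.ext h.symm)
        refine ⟨hge', ?_⟩
        rcases Sym2.mem_iff.mp hb with rfl | rfl
        · -- b = none
          rcases hbc with rfl | hbc
          · exact ⟨some a, by simp, none, hc, Or.inr ((addFalseTwin G x).adj_symm hf)⟩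
          · exact ⟨some x, by simp, c, hc, Or.inr ((twin_adj G x c).mpr hbc)⟩
        · exact ⟨some a, by simp, c, hc, hbc⟩
    · exact Or.inl hadj
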